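/- arXiv:1906.01385 — 2 statements merged into one kernel-verified Lean document; each statement's English description precedes it below -/
import Mathlib

section
/- Let x, y : [0,T) → ℝ be continuously differentiable functions satisfying the ODE system x' = -x + x² + y² and y' = y(x + y). If |x(0)| ≤ ε and |y(0)| ≤ δ with δ ≤ ε and ε, δ ≤ 1/16, then as long as the solution satisfies the a priori bounds |x(t)| ≤ δ + 2ε e^{-t} and |y(t)| ≤ 2δ on [0,t] with t ≤ 1/(12δ), one has the improved bounds |x(t)| ≤ (3/2)ε e^{-t} + (3/8)δ and |y(t)| ≤ (7/4)δ. Consequently the solution exists at least on [0, 1/(12δ)]. -/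
open Real Set Filter Topology

/-!
On any interval where the a priori bounds hold, `x² + y² ≤ 6δ² + 8ε²e^{-2s}` and
`|y (x + y)| ≤ 6δ² + 4δε e^{-s}`. Comparing `e^s x` and `y` with the integrals of these
majorants gives the improved bounds `|x t| ≤ (3/2)εe^{-t} + (3/8)δ` and `|y t| ≤ (7/4)δ` for
`t ≤ 1/(12δ)`. These are strictly better than the a priori bounds, so by continuous induction
the a priori bounds cannot fail first at any time before `1/(12δ)`.
-/

lemma abs_le_of_abs_deriv_le_deriv {f f' B B' : ℝ → ℝ} {a b : ℝ}
    (hf : ∀ s ∈ Icc a b, HasDerivAt f (f' s) s) (hB : ∀ s, HasDerivAt B (B' s) s)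
    (ha : |f a| ≤ B a) (bound : ∀ s ∈ Ico a b, |f' s| ≤ B' s) :
    ∀ s ∈ Icc a b, |f s| ≤ B s := by
  simpa only [Real.norm_eq_abs] using image_norm_le_of_norm_deriv_right_le_deriv_boundary
    (fun s hs => (hf s hs).continuousAt.continuousWithinAt)
    (fun s hs => (hf s (Ico_subset_Icc_self hs)).hasDerivWithinAt) ha hB bound

lemma hasDerivAt_exp_neg (s : ℝ) : HasDerivAt (fun u => exp (-u)) (-exp (-s)) s := by
  simpa using (hasDerivAt_neg s).exp

section Bootstrap

variable {ε δ t : ℝ} {x y : ℝ → ℝ}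

lemma abs_x_le_of_apriori (hδ : 0 < δ) (hδε : δ ≤ ε) (hε : ε ≤ 1 / 16) (ht : 0 ≤ t)
    (hx0 : |x 0| ≤ ε) (hdx : ∀ s ∈ Icc 0 t, HasDerivAt x (-x s + x s ^ 2 + y s ^ 2) s)
    (hb : ∀ s ∈ Icc 0 t, |x s| ≤ δ + 2 * ε * exp (-s) ∧ |y s| ≤ 2 * δ) :
    |x t| ≤ 3 / 2 * ε * exp (-t) + 3 / 8 * δ := by
  have hweighted :
      |exp t * x t| ≤ ε + 6 * δ ^ 2 * (exp t - 1) + 8 * ε ^ 2 * (1 - exp (-t)) := by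
    refine abs_le_of_abs_deriv_le_deriv (f := fun s => exp s * x s)
      (f' := fun s => exp s * (x s ^ 2 + y s ^ 2))
      (B := fun s => ε + 6 * δ ^ 2 * (exp s - 1) + 8 * ε ^ 2 * (1 - exp (-s)))
      (B' := fun s => 6 * δ ^ 2 * exp s + 8 * ε ^ 2 * exp (-s)) ?_ ?_ ?_ ?_ t ⟨ht, le_rfl⟩
    · intro s hs
      exact ((hasDerivAt_exp s).mul (hdx s hs)).congr_deriv (by ring)
    · intro s
      have := (((hasDerivAt_exp s).sub_const 1).const_mul (6 * δ ^ 2)).const_add ε |>.add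
        (((hasDerivAt_exp_neg s).const_sub 1).const_mul (8 * ε ^ 2))
      exact this.congr_deriv (by ring)
    · simpa using hx0
    · intro s hs
      obtain ⟨hxs, hys⟩ := hb s (Ico_subset_Icc_self hs)
      have hsq : x s ^ 2 + y s ^ 2 ≤ 6 * δ ^ 2 + 8 * ε ^ 2 * exp (-s) ^ 2 := by
        nlinarith [sq_abs (x s), sq_abs (y s), abs_nonneg (x s), abs_nonneg (y s),
          sq_nonneg (δ - 2 * ε * exp (-s))]
      have hexp : exp s * exp (-s) = 1 := by rw [← exp_add, add_neg_cancel, exp_zero]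
      rw [abs_of_nonneg (by positivity)]
      calc exp s * (x s ^ 2 + y s ^ 2)
          ≤ exp s * (6 * δ ^ 2 + 8 * ε ^ 2 * exp (-s) ^ 2) := by gcongr
        _ = 6 * δ ^ 2 * exp s + 8 * ε ^ 2 * exp (-s) := by
          linear_combination 8 * ε ^ 2 * exp (-s) * hexp
  have hexp : exp (-t) * exp t = 1 := by rw [← exp_add, neg_add_cancel, exp_zero]
  have hE : 0 < exp (-t) := exp_pos _
  calc |x t| = exp (-t) * |exp t * x t| := by
        rw [abs_mul, abs_of_pos (exp_pos t), ← mul_assoc, hexp, one_mul]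
    _ ≤ exp (-t) * (ε + 6 * δ ^ 2 * (exp t - 1) + 8 * ε ^ 2 * (1 - exp (-t))) := by gcongr
    _ = ε * exp (-t) + 6 * δ ^ 2 * (1 - exp (-t)) + 8 * ε ^ 2 * (exp (-t) - exp (-t) ^ 2) := by
        linear_combination 6 * δ ^ 2 * hexp
    _ ≤ 3 / 2 * ε * exp (-t) + 3 / 8 * δ := by
        nlinarith [mul_nonneg (mul_nonneg (hδ.le.trans hδε) (by linarith : 0 ≤ 1 / 2 - 8 * ε))
            hE.le,
          mul_nonneg hδ.le (by linarith : 0 ≤ 3 / 8 - 6 * δ), mul_nonneg (sq_nonneg δ) hE.le,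
          mul_nonneg (sq_nonneg ε) (sq_nonneg (exp (-t)))]

lemma abs_y_le_of_apriori (hδ : 0 < δ) (hδε : δ ≤ ε) (hε : ε ≤ 1 / 16) (ht : 0 ≤ t)
    (htδ : t ≤ 1 / (12 * δ)) (hy0 : |y 0| ≤ δ)
    (hdy : ∀ s ∈ Icc 0 t, HasDerivAt y (y s * (x s + y s)) s)
    (hb : ∀ s ∈ Icc 0 t, |x s| ≤ δ + 2 * ε * exp (-s) ∧ |y s| ≤ 2 * δ) :
    |y t| ≤ 7 / 4 * δ := by
  have hcompare : |y t| ≤ δ + 6 * δ ^ 2 * t + 4 * δ * ε * (1 - exp (-t)) := by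
    refine abs_le_of_abs_deriv_le_deriv
      (B := fun s => δ + 6 * δ ^ 2 * s + 4 * δ * ε * (1 - exp (-s)))
      (B' := fun s => 6 * δ ^ 2 + 4 * δ * ε * exp (-s))
      hdy ?_ ?_ ?_ t ⟨ht, le_rfl⟩
    · intro s
      have := (((hasDerivAt_id s).const_mul (6 * δ ^ 2)).const_add δ).add
        (((hasDerivAt_exp_neg s).const_sub 1).const_mul (4 * δ * ε))
      exact this.congr_deriv (by simp)
    · simpa using hy0
    · intro s hs
      obtain ⟨hxs, hys⟩ := hb s (Ico_subset_Icc_self hs)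
      calc |y s * (x s + y s)| ≤ |y s| * (|x s| + |y s|) := by
            rw [abs_mul]; gcongr; exact abs_add_le _ _
        _ ≤ 2 * δ * (δ + 2 * ε * exp (-s) + 2 * δ) := by gcongr
        _ = 6 * δ ^ 2 + 4 * δ * ε * exp (-s) := by ring
  have hlinear : 6 * δ ^ 2 * t ≤ δ / 2 := by
    have := (le_div_iff₀ (by positivity : 0 < 12 * δ)).mp htδ
    nlinarith
  have hexp : 0 < exp (-t) := exp_pos _
  nlinarith [mul_pos hδ (hδ.trans_le hδε)]

lemma apriori_of_strict_improvement {t₀ : ℝ} (hδ : 0 < δ) (hδε : δ ≤ ε)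
    (hx0 : |x 0| ≤ ε) (hy0 : |y 0| ≤ δ)
    (hx : ∀ t ∈ Icc 0 t₀, ContinuousAt x t) (hy : ∀ t ∈ Icc 0 t₀, ContinuousAt y t)
    (improve : ∀ t ∈ Ico 0 t₀,
      (∀ s ∈ Icc 0 t, |x s| ≤ δ + 2 * ε * exp (-s) ∧ |y s| ≤ 2 * δ) →
      |x t| < δ + 2 * ε * exp (-t) ∧ |y t| < 2 * δ) :
    ∀ t ∈ Icc 0 t₀, |x t| ≤ δ + 2 * ε * exp (-t) ∧ |y t| ≤ 2 * δ := by
  have hbound : Continuous fun s => δ + 2 * ε * exp (-s) := by fun_prop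
  refine IsClosed.Icc_subset_of_forall_mem_nhdsGT_of_Icc_subset
    (s := {t | |x t| ≤ δ + 2 * ε * exp (-t) ∧ |y t| ≤ 2 * δ}) ?_ ?_ ?_
  · have hclosed_x := isClosed_Icc.isClosed_le
      (continuousOn_of_forall_continuousAt fun t ht => (hx t ht).abs) hbound.continuousOn
    have hclosed_y := isClosed_Icc.isClosed_le
      (continuousOn_of_forall_continuousAt fun t ht => (hy t ht).abs)
      (continuousOn_const (c := 2 * δ))
    convert hclosed_x.inter hclosed_y using 1
    ext t
    simp only [mem_inter_iff, mem_ofPred_eq]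
    tauto
  · simp only [mem_ofPred_eq, neg_zero, exp_zero, mul_one]
    constructor <;> linarith
  · intro t ht hprior
    obtain ⟨hxt, hyt⟩ := improve t ht hprior
    apply nhdsWithin_le_nhds
    filter_upwards [((hx t (Ico_subset_Icc_self ht)).abs).eventually_lt hbound.continuousAt hxt,
      ((hy t (Ico_subset_Icc_self ht)).abs).eventually_lt continuousAt_const hyt] with s hxs hys
    exact ⟨hxs.le, hys.le⟩

end Bootstrap

/-- Bootstrap estimate and persistence of the ansatz bounds for the toy ODE system
`x' = -x + x² + y²`, `y' = y(x+y)`, giving existence (of the bounds) up to time `1/(12δ)`. -/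
theorem stmt0 (T ε δ : ℝ) (x y : ℝ → ℝ)
    (hδ : 0 < δ) (hδε : δ ≤ ε) (hε : ε ≤ 1 / 16)
    (hx0 : |x 0| ≤ ε) (hy0 : |y 0| ≤ δ)
    (hdx : ∀ t ∈ Set.Ico (0 : ℝ) T, HasDerivAt x (-x t + x t ^ 2 + y t ^ 2) t)
    (hdy : ∀ t ∈ Set.Ico (0 : ℝ) T, HasDerivAt y (y t * (x t + y t)) t) :
    (∀ t ∈ Set.Ico (0 : ℝ) T, t ≤ 1 / (12 * δ) →
      (∀ s ∈ Set.Icc (0 : ℝ) t, |x s| ≤ δ + 2 * ε * Real.exp (-s) ∧ |y s| ≤ 2 * δ) →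
      |x t| ≤ (3 / 2) * ε * Real.exp (-t) + (3 / 8) * δ ∧ |y t| ≤ (7 / 4) * δ) ∧
    (∀ t ∈ Set.Ico (0 : ℝ) T, t ≤ 1 / (12 * δ) →
      |x t| ≤ δ + 2 * ε * Real.exp (-t) ∧ |y t| ≤ 2 * δ) := by
  have hIcc : ∀ {t}, t ∈ Ico 0 T → Icc 0 t ⊆ Ico 0 T := fun ht _ hs => ⟨hs.1, hs.2.trans_lt ht.2⟩
  have improve : ∀ t ∈ Ico 0 T, t ≤ 1 / (12 * δ) →
      (∀ s ∈ Icc 0 t, |x s| ≤ δ + 2 * ε * exp (-s) ∧ |y s| ≤ 2 * δ) →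
      |x t| ≤ 3 / 2 * ε * exp (-t) + 3 / 8 * δ ∧ |y t| ≤ 7 / 4 * δ := fun t ht htδ hb =>
    ⟨abs_x_le_of_apriori hδ hδε hε ht.1 hx0 (fun s hs => hdx s (hIcc ht hs)) hb,
      abs_y_le_of_apriori hδ hδε hε ht.1 htδ hy0 (fun s hs => hdy s (hIcc ht hs)) hb⟩
  refine ⟨improve, fun t₀ ht₀ ht₀δ => ?_⟩
  refine apriori_of_strict_improvement hδ hδε hx0 hy0
    (fun t ht => (hdx t (hIcc ht₀ ht)).continuousAt)
    (fun t ht => (hdy t (hIcc ht₀ ht)).continuousAt)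
    (fun t ht hb => ?_) t₀ ⟨ht₀.1, le_rfl⟩
  have htT : t ∈ Ico 0 T := hIcc ht₀ (Ico_subset_Icc_self ht)
  obtain ⟨hxt, hyt⟩ := improve t htT (ht.2.le.trans ht₀δ) hb
  have hεE : 0 < ε * exp (-t) := mul_pos (hδ.trans_le hδε) (exp_pos _)
  constructor <;> linarith
end

section
/- Let ψ be a smooth solution of i∂_t ψ + Δψ = g(|ψ|²)ψ/2 with real-valued initial data ψ₀. Suppose ψ₀(0) = 0 and Δψ₀(0) ≠ 0. Then ∂_t|ψ|²(x, 0) = 0 for all x, and ∂_t²|ψ|²(0,0) = 2|Δψ₀(0)|² > 0. Consequently there exist α > 0 and a neighborhood U of (0,0) in ℝ^d × ℝ such that for all (x,t) ∈ U, |ψ(x,t)|² ≥ α t²/2. -/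
open Complex Topology

noncomputable def pd5 {d : ℕ} {F : Type*} [NormedAddCommGroup F] [NormedSpace ℝ F]
    (j : Fin d) (f : EuclideanSpace ℝ (Fin d) → F) (x : EuclideanSpace ℝ (Fin d)) : F :=
  fderiv ℝ f x (EuclideanSpace.single j 1)

noncomputable def lap5 {d : ℕ} {F : Type*} [NormedAddCommGroup F] [NormedSpace ℝ F]
    (f : EuclideanSpace ℝ (Fin d) → F) (x : EuclideanSpace ℝ (Fin d)) : F :=
  ∑ j : Fin d, pd5 j (fun y => pd5 j f y) x

lemma aux_im_fderiv {E : Type*} [NormedAddCommGroup E] [NormedSpace ℝ E]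
    (φ : E → ℂ) (hφ : Differentiable ℝ φ) (h : ∀ x, (φ x).im = 0) (x : E) (v : E) :
    (fderiv ℝ φ x v).im = 0 := by
  have h1 : (fun x => Complex.imCLM (φ x)) = fun _ => (0 : ℝ) := funext fun x => h x
  have h2 : HasFDerivAt (fun x => Complex.imCLM (φ x))
      (Complex.imCLM.comp (fderiv ℝ φ x)) x :=
    Complex.imCLM.hasFDerivAt.comp x (hφ x).hasFDerivAt
  rw [h1] at h2
  have h3 : (Complex.imCLM.comp (fderiv ℝ φ x)) = 0 := by
    have := h2.fderiv
    rw [fderiv_fun_const] at this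
    simpa using this.symm ▸ this
  have := DFunLike.congr_fun h3 v
  simpa using this

lemma aux_hasDerivAt_normSq (f : ℝ → ℂ) (f' : ℂ) (t : ℝ) (hf : HasDerivAt f f' t) :
    HasDerivAt (fun τ => ‖f τ‖ ^ 2) (2 * ((starRingEnd ℂ) (f t) * f').re) t := by
  have hre : HasDerivAt (fun τ => (f τ).re) f'.re t :=
    (Complex.reCLM.hasFDerivAt.comp_hasDerivAt t hf)
  have him : HasDerivAt (fun τ => (f τ).im) f'.im t :=
    (Complex.imCLM.hasFDerivAt.comp_hasDerivAt t hf)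
  have h := ((hre.pow 2).add (him.pow 2))
  have heq : (fun τ => ‖f τ‖ ^ 2) = fun τ => (f τ).re ^ 2 + (f τ).im ^ 2 := by
    funext τ
    rw [Complex.sq_norm, Complex.normSq_apply]
    ring
  rw [heq]
  refine h.congr_deriv ?_
  simp [Complex.mul_re]
  ring

lemma aux_partial {E : Type*} [NormedAddCommGroup E] [NormedSpace ℝ E]
    {F : Type*} [NormedAddCommGroup F] [NormedSpace ℝ F]
    {Φ : ℝ × E → F} (hΦ : Differentiable ℝ Φ) (t : ℝ) (x : E) :
    HasDerivAt (fun τ => Φ (τ, x)) (fderiv ℝ Φ (t, x) (1, 0)) t := by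
  have hL : HasDerivAt (fun τ : ℝ => ((τ, x) : ℝ × E)) ((1 : ℝ), (0 : E)) t :=
    HasDerivAt.prodMk (hasDerivAt_id t) (hasDerivAt_const t x)
  exact (hΦ (t, x)).hasFDerivAt.comp_hasDerivAt t hL


/-- A smooth solution of `i∂_tψ + Δψ = g(|ψ|²)ψ/2` with real-valued initial data vanishing
(nondegenerately) at the origin satisfies `∂_t|ψ|²(·,0) = 0`,
`∂_t²|ψ|²(0,0) = 2|Δψ₀(0)|² > 0`, and hence `|ψ(x,t)|² ≥ α t²/2` near `(0,0)`. -/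
theorem stmt5 (d : ℕ) (g : ℝ → ℝ) (hg : ContDiff ℝ (⊤ : ℕ∞) g)
    (ψ : ℝ → EuclideanSpace ℝ (Fin d) → ℂ)
    (hψ : ContDiff ℝ (⊤ : ℕ∞) (fun p : ℝ × EuclideanSpace ℝ (Fin d) => ψ p.1 p.2))
    (heq : ∀ t x, Complex.I * deriv (fun τ => ψ τ x) t + lap5 (ψ t) x
      = (g (‖ψ t x‖ ^ 2) : ℂ) * ψ t x / 2)
    (hreal : ∀ x, (ψ 0 x).im = 0)
    (h0 : ψ 0 0 = 0)
    (hΔ : lap5 (ψ 0) 0 ≠ 0) :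
    (∀ x, deriv (fun τ => ‖ψ τ x‖ ^ 2) 0 = 0) ∧
    deriv (deriv (fun τ => ‖ψ τ (0 : EuclideanSpace ℝ (Fin d))‖ ^ 2)) 0
      = 2 * ‖lap5 (ψ 0) 0‖ ^ 2 ∧
    (0 < 2 * ‖lap5 (ψ 0) 0‖ ^ 2) ∧
    ∃ α > (0 : ℝ), ∃ U ∈ 𝓝 ((0, 0) : EuclideanSpace ℝ (Fin d) × ℝ),
      ∀ p ∈ U, ‖ψ p.2 p.1‖ ^ 2 ≥ α * p.2 ^ 2 / 2 := by
  classical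
  -- Package G = ∂_t |ψ|², F = ∂_t² |ψ|²
  have pack : ∃ G F : ℝ × EuclideanSpace ℝ (Fin d) → ℝ, Continuous F ∧
      (∀ t x, HasDerivAt (fun τ => ‖ψ τ x‖ ^ 2) (G (t, x)) t) ∧
      (∀ t x, HasDerivAt (fun τ => G (τ, x)) (F (t, x)) t) := by
    have hH : ContDiff ℝ (⊤ : ℕ∞) (fun q : ℝ × EuclideanSpace ℝ (Fin d) => ‖ψ q.1 q.2‖ ^ 2) :=
      hψ.norm_sq (𝕜 := ℂ)
    have hG : ContDiff ℝ (⊤ : ℕ∞) (fun p : ℝ × EuclideanSpace ℝ (Fin d) =>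
        fderiv ℝ (fun q : ℝ × EuclideanSpace ℝ (Fin d) => ‖ψ q.1 q.2‖ ^ 2) p (1, 0)) :=
      (hH.fderiv_right (by simp)).clm_apply contDiff_const
    refine ⟨fun p => fderiv ℝ (fun q : ℝ × EuclideanSpace ℝ (Fin d) => ‖ψ q.1 q.2‖ ^ 2) p (1, 0),
      fun p => fderiv ℝ (fun p : ℝ × EuclideanSpace ℝ (Fin d) =>
        fderiv ℝ (fun q : ℝ × EuclideanSpace ℝ (Fin d) => ‖ψ q.1 q.2‖ ^ 2) p (1, 0)) p (1, 0),
      ?_, fun t x => aux_partial (hH.differentiable (by simp)) t x,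
      fun t x => aux_partial (hG.differentiable (by simp)) t x⟩
    exact ContDiff.continuous (n := (⊤ : ℕ∞)) ((hG.fderiv_right (by simp)).clm_apply contDiff_const)
  obtain ⟨G, F, hFc, lemA, lemB⟩ := pack
  have hψx : ∀ x, ContDiff ℝ (⊤ : ℕ∞) (fun τ => ψ τ x) :=
    fun x => hψ.comp (contDiff_id.prodMk contDiff_const)
  have hψd : ∀ t x, HasDerivAt (fun τ => ψ τ x) (deriv (fun τ => ψ τ x) t) t :=
    fun t x => ((hψx x).differentiable (by simp) t).hasDerivAt
  have lemC : ∀ t x, G (t, x) = 2 * ((starRingEnd ℂ) (ψ t x) * deriv (fun τ => ψ τ x) t).re :=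
    fun t x => (lemA t x).unique (aux_hasDerivAt_normSq _ _ t (hψd t x))
  -- reality of the Laplacian at time 0
  have hψ0 : ContDiff ℝ (⊤ : ℕ∞) (ψ 0) := hψ.comp (contDiff_const.prodMk contDiff_id)
  have hpdim : ∀ (j : Fin d) x, (pd5 j (ψ 0) x).im = 0 :=
    fun j x => aux_im_fderiv _ (hψ0.differentiable (by simp)) hreal x _
  have hpdsm : ∀ j : Fin d, ContDiff ℝ (⊤ : ℕ∞) (fun y => pd5 j (ψ 0) y) :=
    fun j => (hψ0.fderiv_right (by simp)).clm_apply contDiff_const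
  have hlapim : ∀ x, (lap5 (ψ 0) x).im = 0 := by
    intro x
    rw [lap5, Complex.im_sum]
    exact Finset.sum_eq_zero fun j _ =>
      aux_im_fderiv _ ((hpdsm j).differentiable (by simp)) (hpdim j) x _
  have hpsit0 : ∀ x, deriv (fun τ => ψ τ x) 0
      = Complex.I * lap5 (ψ 0) x - Complex.I * ((g (‖ψ 0 x‖ ^ 2) : ℂ) * ψ 0 x / 2) := by
    intro x
    have h := heq 0 x
    linear_combination (-Complex.I) * h + (deriv (fun τ => ψ τ x) 0) * Complex.I_mul_I
  have hG0 : ∀ x, G (0, x) = 0 := by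
    intro x
    rw [lemC 0 x, hpsit0 x]
    have h1 := hreal x
    have h2 := hlapim x
    simp [Complex.mul_re, Complex.mul_im, Complex.div_re, Complex.div_im, h1, h2]
  have part1 : ∀ x, deriv (fun τ => ‖ψ τ x‖ ^ 2) 0 = 0 :=
    fun x => (lemA 0 x).deriv.trans (hG0 x)
  -- second time derivative at the origin
  have hf1sm : ContDiff ℝ (⊤ : ℕ∞) (fun τ => deriv (fun σ => ψ σ (0 : EuclideanSpace ℝ (Fin d))) τ) := by
    exact ((hψx 0).fderiv_right (by simp)).clm_apply (contDiff_const (c := (1:ℝ)))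
  have hf1d : HasDerivAt (fun τ => deriv (fun σ => ψ σ (0 : EuclideanSpace ℝ (Fin d))) τ)
      (deriv (fun τ => deriv (fun σ => ψ σ (0 : EuclideanSpace ℝ (Fin d))) τ) 0) 0 :=
    ((hf1sm.differentiable (by simp)) 0).hasDerivAt
  have hconj : HasDerivAt (fun τ => (starRingEnd ℂ) (ψ τ (0 : EuclideanSpace ℝ (Fin d))))
      ((starRingEnd ℂ) (deriv (fun τ => ψ τ (0 : EuclideanSpace ℝ (Fin d))) 0)) 0 := by
    have := Complex.conjCLE.toContinuousLinearMap.hasFDerivAt.comp_hasDerivAt 0 (hψd 0 0)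
    simpa [Function.comp_def] using this
  have hkey : HasDerivAt (fun τ => G (τ, (0 : EuclideanSpace ℝ (Fin d))))
      (2 * ‖lap5 (ψ 0) 0‖ ^ 2) 0 := by
    have hGfun : (fun τ => G (τ, (0 : EuclideanSpace ℝ (Fin d))))
        = fun τ => 2 * ((starRingEnd ℂ) (ψ τ 0) * deriv (fun σ => ψ σ 0) τ).re :=
      funext fun τ => lemC τ 0
    rw [hGfun]
    have hre := (Complex.reCLM.hasFDerivAt.comp_hasDerivAt 0 (hconj.mul hf1d)).const_mul (2:ℝ)
    refine hre.congr_deriv ?_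
    rw [h0, hpsit0 0, h0]
    simp only [map_zero, zero_mul, mul_zero, add_zero, Complex.ofReal_zero, zero_div,
      Complex.reCLM_apply, sub_zero]
    rw [Complex.sq_norm, Complex.normSq_apply]
    simp [Complex.mul_re, Complex.mul_im]
  have hd2 : deriv (deriv (fun τ => ‖ψ τ (0 : EuclideanSpace ℝ (Fin d))‖ ^ 2)) 0
      = 2 * ‖lap5 (ψ 0) 0‖ ^ 2 := by
    have hd1 : deriv (fun τ => ‖ψ τ (0 : EuclideanSpace ℝ (Fin d))‖ ^ 2)
        = fun τ => G (τ, 0) := funext fun τ => (lemA τ 0).deriv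
    rw [hd1]
    exact hkey.deriv
  have hLpos : (0:ℝ) < ‖lap5 (ψ 0) 0‖ ^ 2 := pow_pos (norm_pos_iff.2 hΔ) 2
  refine ⟨part1, hd2, by linarith, ?_⟩
  -- the quantitative lower bound
  have hF00 : F (0, 0) = 2 * ‖lap5 (ψ 0) 0‖ ^ 2 := (lemB 0 0).unique hkey
  set α : ℝ := ‖lap5 (ψ 0) 0‖ ^ 2 with hα
  have hopen : IsOpen (F ⁻¹' Set.Ioi α) := isOpen_Ioi.preimage hFc
  have hmem : ((0:ℝ), (0:EuclideanSpace ℝ (Fin d))) ∈ F ⁻¹' Set.Ioi α := by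
    simp only [Set.mem_preimage, Set.mem_Ioi, hF00]
    linarith
  obtain ⟨r, hr, hball⟩ := Metric.isOpen_iff.1 hopen _ hmem
  refine ⟨α, hLpos, Metric.ball (0:EuclideanSpace ℝ (Fin d)) r ×ˢ Metric.ball (0:ℝ) r,
    prod_mem_nhds (Metric.ball_mem_nhds _ hr) (Metric.ball_mem_nhds _ hr), ?_⟩
  rintro ⟨x, t⟩ ⟨hx, ht⟩
  simp only [ge_iff_le]
  have hFpos : ∀ τ ∈ Metric.ball (0:ℝ) r, α < F (τ, x) := by
    intro τ hτ
    apply hball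
    rw [← ball_prod_same]
    exact Set.mk_mem_prod hτ hx
  have hwd : ∀ τ, HasDerivAt (fun σ => ‖ψ σ x‖ ^ 2 - α * σ ^ 2 / 2) (G (τ, x) - α * τ) τ := by
    intro τ
    have h2 : HasDerivAt (fun σ : ℝ => α * σ ^ 2 / 2) (α * τ) τ := by
      have := ((hasDerivAt_pow 2 τ).const_mul α).div_const 2
      refine this.congr_deriv ?_
      push_cast
      ring
    exact (lemA τ x).sub h2
  have hw'd : ∀ τ, HasDerivAt (fun σ => G (σ, x) - α * σ) (F (τ, x) - α) τ := by
    intro τ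
    have h2 : HasDerivAt (fun σ : ℝ => α * σ) α τ := by
      simpa using (hasDerivAt_id τ).const_mul α
    exact (lemB τ x).sub h2
  have hw'cont : Continuous (fun σ => G (σ, x) - α * σ) :=
    continuous_iff_continuousAt.2 fun τ => (hw'd τ).continuousAt
  have hwcont : Continuous (fun σ => ‖ψ σ x‖ ^ 2 - α * σ ^ 2 / 2) :=
    continuous_iff_continuousAt.2 fun τ => (hwd τ).continuousAt
  have hmono : StrictMonoOn (fun σ => G (σ, x) - α * σ) (Metric.ball (0:ℝ) r) := by
    apply strictMonoOn_of_deriv_pos (convex_ball 0 r) hw'cont.continuousOn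
    intro τ hτ
    rw [Metric.isOpen_ball.interior_eq] at hτ
    rw [(hw'd τ).deriv]
    exact sub_pos.2 (hFpos τ hτ)
  have hw'0 : G ((0:ℝ), x) - α * 0 = 0 := by rw [hG0 x]; ring
  have hzball : (0:ℝ) ∈ Metric.ball (0:ℝ) r := Metric.mem_ball_self hr
  have hw0 : (0:ℝ) ≤ ‖ψ 0 x‖ ^ 2 - α * 0 ^ 2 / 2 := by
    have : (0:ℝ) ≤ ‖ψ 0 x‖ ^ 2 := by positivity
    linarith
  rw [Real.ball_eq_Ioo] at ht
  obtain ⟨ht1, ht2⟩ := ht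
  rcases lt_trichotomy t 0 with htneg | hteq | htpos
  · -- t < 0
    obtain ⟨c, hc, hslope⟩ := exists_hasDerivAt_eq_slope
      (fun σ => ‖ψ σ x‖ ^ 2 - α * σ ^ 2 / 2) (fun σ => G (σ, x) - α * σ) htneg
      hwcont.continuousOn (fun σ _ => hwd σ)
    obtain ⟨hc1, hc2⟩ := hc
    have hcball : c ∈ Metric.ball (0:ℝ) r := by
      rw [Real.ball_eq_Ioo]
      constructor <;> [linarith; linarith]
    have h1 : G (c, x) - α * c < 0 := by
      have h := hmono hcball hzball hc2
      simpa [hG0 x] using h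
    rw [hslope] at h1
    have hpos : (0:ℝ) < 0 - t := by linarith
    have h3 := (div_neg_iff).1 h1
    have h4 : (‖ψ 0 x‖ ^ 2 - α * 0 ^ 2 / 2) - (‖ψ t x‖ ^ 2 - α * t ^ 2 / 2) < 0 := by
      rcases h3 with ⟨h5, h6⟩ | ⟨h5, h6⟩
      · linarith
      · linarith
    linarith
  · subst hteq
    have : (0:ℝ) ≤ ‖ψ 0 x‖ ^ 2 := by positivity
    simpa using this
  · -- 0 < t
    obtain ⟨c, hc, hslope⟩ := exists_hasDerivAt_eq_slope
      (fun σ => ‖ψ σ x‖ ^ 2 - α * σ ^ 2 / 2) (fun σ => G (σ, x) - α * σ) htpos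
      hwcont.continuousOn (fun σ _ => hwd σ)
    obtain ⟨hc1, hc2⟩ := hc
    have hcball : c ∈ Metric.ball (0:ℝ) r := by
      rw [Real.ball_eq_Ioo]
      constructor <;> [linarith; linarith]
    have h1 : 0 < G (c, x) - α * c := by
      have h := hmono hzball hcball hc1
      simpa [hG0 x] using h
    rw [hslope] at h1
    have h3 := (div_pos_iff).1 h1
    have h4 : 0 < (‖ψ t x‖ ^ 2 - α * t ^ 2 / 2) - (‖ψ 0 x‖ ^ 2 - α * 0 ^ 2 / 2) := by
      rcases h3 with ⟨h5, h6⟩ | ⟨h5, h6⟩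
      · linarith
      · linarith
    linarith
end
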